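/- arXiv:1305.3530 — 6 statements merged into one kernel-verified Lean document; each statement's English description precedes it below -/
import Mathlib

section
/- The multiset ordering on finite multisets over a well-ordered set is itself a well-ordering. Precisely: if (S, ≤) is a well-ordered set, then the ordering ≤_m on finite multisets over S, defined by f ≤_m g iff for every x ∈ S with f(x) > g(x) there exists y > x with g(y) > f(y), is a well-order. -/
/-- An algebraic signature: a type of operation symbols with arities. -/
structure Signature where
  ops : Type
  arity : ops → ℕ

/-- An algebra for a signature `S`. -/
structure Alg (S : Signature) where
  carrier : Type
  interp : ∀ o : S.ops, (Fin (S.arity o) → carrier) → carrier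

/-- Terms over a set `X` of variables. -/
inductive Term (S : Signature) (X : Type) : Type where
  | var : X → Term S X
  | op : (o : S.ops) → (Fin (S.arity o) → Term S X) → Term S X

variable {S : Signature}

/-- Evaluation of a term in an algebra under an assignment of variables. -/
def Term.eval {X : Type} (A : Alg S) (h : X → A.carrier) : Term S X → A.carrier
  | .var x => h x
  | .op o args => A.interp o (fun i => (args i).eval A h)

/-- Application of a substitution to a term. -/
def Term.subst (σ : ℕ → Term S ℕ) : Term S ℕ → Term S ℕ
  | .var x => σ x
  | .op o args => .op o (fun i => (args i).subst σ)

/-- Homomorphisms of algebras. -/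
def IsHom (A B : Alg S) (f : A.carrier → B.carrier) : Prop :=
  ∀ (o : S.ops) (args : Fin (S.arity o) → A.carrier),
    f (A.interp o args) = B.interp o (fun i => f (args i))

/-- Embeddings of algebras: injective homomorphisms. -/
def IsEmbedding (A B : Alg S) (f : A.carrier → B.carrier) : Prop :=
  IsHom A B f ∧ Function.Injective f

/-- `A` embeds into `B` (i.e. `A` is isomorphic to a subalgebra of `B`). -/
def Embeds (A B : Alg S) : Prop := ∃ f, IsEmbedding A B f

/-- Isomorphism of algebras. -/
def Iso (A B : Alg S) : Prop := ∃ f, IsHom A B f ∧ Function.Bijective f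

/-- Product of a family of algebras. -/
def ProdAlg {I : Type} (F : I → Alg S) : Alg S where
  carrier := ∀ i, (F i).carrier
  interp o args i := (F i).interp o (fun j => args j i)

/-- Binary product of algebras. -/
def Alg.prod (A B : Alg S) : Alg S where
  carrier := A.carrier × B.carrier
  interp o args := (A.interp o (fun i => (args i).1), B.interp o (fun i => (args i).2))

/-- `A` is a subdirect product of the family `F`: there is an embedding of `A`
into the product whose composition with each projection is surjective. -/
def IsSubdirectProduct (A : Alg S) {I : Type} (F : I → Alg S) : Prop :=
  ∃ f : A.carrier → (ProdAlg F).carrier,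
    IsEmbedding A (ProdAlg F) f ∧ ∀ i, Function.Surjective (fun a => f a i)

/-- An equation: an ordered pair of terms. -/
abbrev Eqn (S : Signature) (X : Type) := Term S X × Term S X

/-- An equation holds in an algebra. -/
def Alg.SatisfiesEqn {X : Type} (A : Alg S) (e : Eqn S X) : Prop :=
  ∀ h : X → A.carrier, e.1.eval A h = e.2.eval A h

/-- An equation is valid in a class of algebras. -/
def EqValid (K : Set (Alg S)) (e : Eqn S ℕ) : Prop := ∀ A ∈ K, A.SatisfiesEqn e

/-- A quasiequation: finitely many premises and one conclusion. -/
structure Quasieq (S : Signature) where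
  prem : List (Eqn S ℕ)
  concl : Eqn S ℕ

/-- A quasiequation holds in an algebra. -/
def Alg.SatisfiesQ (A : Alg S) (q : Quasieq S) : Prop :=
  ∀ h : ℕ → A.carrier,
    (∀ e ∈ q.prem, e.1.eval A h = e.2.eval A h) →
      q.concl.1.eval A h = q.concl.2.eval A h

/-- The quasivariety generated by `K`: the class axiomatized by all
quasiequations valid in `K`. -/
def QGen (K : Set (Alg S)) : Set (Alg S) :=
  { A | ∀ q : Quasieq S, (∀ B ∈ K, B.SatisfiesQ q) → A.SatisfiesQ q }

/-- The variety generated by `K`: the class axiomatized by all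
equations valid in `K`. -/
def VGen (K : Set (Alg S)) : Set (Alg S) :=
  { A | ∀ e : Eqn S ℕ, (∀ B ∈ K, B.SatisfiesEqn e) → A.SatisfiesEqn e }

/-- A quasivariety is a class axiomatizable by quasiequations. -/
def IsQuasivariety (Q : Set (Alg S)) : Prop := QGen Q = Q

/-- `A` is `Q`-subdirectly irreducible: `A ∈ Q` and for every `Q`-subdirect
representation of `A`, `A` is isomorphic to one of the components. -/
def QSubdirectlyIrreducible (Q : Set (Alg S)) (A : Alg S) : Prop :=
  A ∈ Q ∧ ∀ (I : Type) (F : I → Alg S), (∀ i, F i ∈ Q) →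
    IsSubdirectProduct A F → ∃ i, Iso A (F i)

/-- A congruence on an algebra. -/
structure Cong (A : Alg S) where
  r : A.carrier → A.carrier → Prop
  iseqv : Equivalence r
  compat : ∀ (o : S.ops) (a b : Fin (S.arity o) → A.carrier),
    (∀ i, r (a i) (b i)) → r (A.interp o a) (A.interp o b)

def Cong.setoid {A : Alg S} (θ : Cong A) : Setoid A.carrier := ⟨θ.r, θ.iseqv⟩

/-- Quotient algebra of `A` by a congruence `θ`. -/
noncomputable def QuotAlg (A : Alg S) (θ : Cong A) : Alg S where
  carrier := Quotient θ.setoid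
  interp o args := Quotient.mk θ.setoid (A.interp o (fun i => (args i).out))

/-- The term algebra over variables `X`. -/
def TermAlg (S : Signature) (X : Type) : Alg S where
  carrier := Term S X
  interp := Term.op

/-- The congruence of all identifications valid in `K` on the term algebra:
the intersection of all congruences whose quotient embeds into a member of `K`. -/
def freeCong (K : Set (Alg S)) (X : Type) : Cong (TermAlg S X) where
  r φ ψ := ∀ A ∈ K, ∀ h : X → A.carrier, φ.eval A h = ψ.eval A h
  iseqv := by
    constructor
    · intro φ A hA h; rfl
    · intro φ ψ H A hA h; exact (H A hA h).symm
    · intro a b c H1 H2 A hA h; exact (H1 A hA h).trans (H2 A hA h)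
  compat := by
    intro o a b hab A hA h
    show Term.eval A h (Term.op o a) = Term.eval A h (Term.op o b)
    simp only [Term.eval]
    congr 1
    funext i
    exact hab i A hA h

/-- The free algebra of `K` over variables `X`. -/
noncomputable def FreeAlg (K : Set (Alg S)) (X : Type) : Alg S :=
  QuotAlg (TermAlg S X) (freeCong K X)

/-- `σ` is a `K`-unifier of the finite set of equations `Γ`. -/
def Unifier (K : Set (Alg S)) (σ : ℕ → Term S ℕ) (Γ : List (Eqn S ℕ)) : Prop :=
  ∀ e ∈ Γ, EqValid K (e.1.subst σ, e.2.subst σ)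

/-- `Γ` is `K`-unifiable. -/
def Unifiable (K : Set (Alg S)) (Γ : List (Eqn S ℕ)) : Prop := ∃ σ, Unifier K σ Γ

/-- The quasiequation `Γ ⇒ e` is `K`-admissible: every `K`-unifier of the
premises unifies the conclusion. -/
def Admissible (K : Set (Alg S)) (Γ : List (Eqn S ℕ)) (e : Eqn S ℕ) : Prop :=
  ∀ σ, Unifier K σ Γ → EqValid K (e.1.subst σ, e.2.subst σ)

/-- The quasiequation `Γ ⇒ e` is valid in the class `K` (`Γ ⊨_K e`). -/
def Models (K : Set (Alg S)) (Γ : List (Eqn S ℕ)) (e : Eqn S ℕ) : Prop :=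
  ∀ A ∈ K, ∀ h : ℕ → A.carrier,
    (∀ e' ∈ Γ, e'.1.eval A h = e'.2.eval A h) → e.1.eval A h = e.2.eval A h

/-- `Γ` is satisfiable in the algebra `A`. -/
def SatIn (A : Alg S) (Γ : List (Eqn S ℕ)) : Prop :=
  ∃ h : ℕ → A.carrier, ∀ e ∈ Γ, e.1.eval A h = e.2.eval A h

/-- Finite multisets over `α`: functions `α → ℕ` with finite support. -/
def FinMultiset (α : Type) : Type := {f : α → ℕ // (Function.support f).Finite}

/-- The Dershowitz–Manna multiset ordering: `f ≤ₘ g` iff whenever `f x > g x`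
there is some `y > x` with `g y > f y`. -/
def MultisetLE {α : Type} [LinearOrder α] (f g : FinMultiset α) : Prop :=
  ∀ x, g.1 x < f.1 x → ∃ y, x < y ∧ f.1 y < g.1 y


/-! The strict multiset order is the colexicographic order on `α →₀ ℕ`: `f < g` iff `f m < g m`
at the largest point `m` where `f` and `g` differ. Mathlib's colex order on finitely supported
functions into `ℕ` over a well-ordered index type is a well-order. -/

namespace FinMultiset

variable {α : Type}

noncomputable def toFinsupp (f : FinMultiset α) : α →₀ ℕ :=
  Finsupp.ofSupportFinite f.1 f.2

theorem toFinsupp_injective : Function.Injective (toFinsupp (α := α)) := fun _ _ h =>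
  Subtype.ext (congrArg DFunLike.coe h)

theorem multisetLE_and_ne_iff_toColex_lt [LinearOrder α] {f g : FinMultiset α} :
    MultisetLE f g ∧ f ≠ g ↔ toColex f.toFinsupp < toColex g.toFinsupp := by
  constructor
  · rintro ⟨hle, hne⟩
    refine (lt_or_gt_of_ne fun h => hne (toFinsupp_injective (toColex.injective h))).resolve_right ?_
    rintro ⟨m, hagree, hgf⟩
    obtain ⟨y, hmy, hfg⟩ := hle m hgf
    exact hfg.ne (hagree y hmy).symm
  · intro hlt
    refine ⟨fun x hgf => ?_, fun h => hlt.ne (by rw [h])⟩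
    obtain ⟨m, hagree, hfg⟩ := hlt
    refine ⟨m, lt_of_not_ge fun hmx => ?_, hfg⟩
    rcases hmx.lt_or_eq with hmx | rfl
    · exact hgf.ne (hagree x hmx).symm
    · exact hgf.not_gt hfg

noncomputable def toColexEmbedding [LinearOrder α] :
    (fun f g : FinMultiset α => MultisetLE f g ∧ f ≠ g) ↪r
      ((· < ·) : Colex (α →₀ ℕ) → Colex (α →₀ ℕ) → Prop) where
  toFun f := toColex f.toFinsupp
  inj' := toColex.injective.comp toFinsupp_injective
  map_rel_iff' := multisetLE_and_ne_iff_toColex_lt.symm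

end FinMultiset

/-- The multiset ordering on finite multisets over a well-ordered set is a
well-ordering. -/
theorem stmt0 {α : Type} [LinearOrder α] [WellFoundedLT α] :
    IsWellOrder (FinMultiset α) (fun f g => MultisetLE f g ∧ f ≠ g) :=
  FinMultiset.toColexEmbedding.isWellOrder
end

section
/- Every algebra A in a quasivariety Q is isomorphic to a Q-subdirect product of Q-subdirectly irreducible members of Q. -/
variable {S : Signature}

/-!
For each pair `a ≠ b` of elements of `A`, Zorn's lemma yields a `Q`-congruence `θ` maximal
among those not identifying `a` and `b`: being closed under the quasiequations of `Q` is a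
finitary condition, so it survives unions of chains. The quotient `A/θ` lies in `Q`, and it is
`Q`-subdirectly irreducible because some factor of any `Q`-subdirect representation of it
separates `a` and `b`, and the kernel of that factor, pulled back to `A`, is a `Q`-congruence
containing `θ`, hence equal to it. These quotients jointly separate the points of `A`.
-/

theorem IsHom.comp {A B C : Alg S} {f : A.carrier → B.carrier} {g : B.carrier → C.carrier}
    (hf : IsHom A B f) (hg : IsHom B C g) : IsHom A C (g ∘ f) := by
  intro o args
  simp only [Function.comp_apply, hf o, hg o]

theorem IsHom.map_eval {X : Type} {A B : Alg S} {k : A.carrier → B.carrier} (hk : IsHom A B k)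
    (h : X → A.carrier) (t : Term S X) : k (t.eval A h) = t.eval B (k ∘ h) := by
  induction t with
  | var x => rfl
  | op o args ih =>
    show k (A.interp o _) = B.interp o _
    rw [hk o]
    exact congrArg _ (funext ih)

theorem IsHom.quotientMk (A : Alg S) (θ : Cong A) :
    IsHom A (QuotAlg A θ) (Quotient.mk θ.setoid) := by
  intro o args
  refine Quotient.sound (θ.compat o _ _ fun i => θ.iseqv.symm ?_)
  exact Quotient.exact (Quotient.out_eq (Quotient.mk θ.setoid (args i)))

theorem Term.eval_quotAlg {A : Alg S} (θ : Cong A) (h : ℕ → (QuotAlg A θ).carrier)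
    (t : Term S ℕ) :
    t.eval (QuotAlg A θ) h = Quotient.mk θ.setoid (t.eval A fun n => (h n).out) := by
  rw [(IsHom.quotientMk A θ).map_eval]
  exact congrArg (t.eval _) (funext fun n => (Quotient.out_eq (h n)).symm)

structure IsQCongruence (Q : Set (Alg S)) (A : Alg S) (c : Set (A.carrier × A.carrier)) :
    Prop where
  equivalence : Equivalence fun x y => (x, y) ∈ c
  compat : ∀ (o : S.ops) (a b : Fin (S.arity o) → A.carrier),
    (∀ i, (a i, b i) ∈ c) → (A.interp o a, A.interp o b) ∈ c
  closed : ∀ q : Quasieq S, (∀ B ∈ Q, B.SatisfiesQ q) → ∀ h : ℕ → A.carrier,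
    (∀ e ∈ q.prem, (e.1.eval A h, e.2.eval A h) ∈ c) →
      (q.concl.1.eval A h, q.concl.2.eval A h) ∈ c

section QCongruence

variable {Q : Set (Alg S)} {A : Alg S}

def IsQCongruence.toCong {c : Set (A.carrier × A.carrier)} (hc : IsQCongruence Q A c) :
    Cong A :=
  ⟨fun x y => (x, y) ∈ c, hc.equivalence, hc.compat⟩

theorem isQCongruence_ker {B : Alg S} (hB : B ∈ Q) {k : A.carrier → B.carrier}
    (hk : IsHom A B k) : IsQCongruence Q A {p | k p.1 = k p.2} where
  equivalence := ⟨fun _ => rfl, Eq.symm, Eq.trans⟩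
  compat o a b hab := by
    show k (A.interp o a) = k (A.interp o b)
    rw [hk, hk]
    exact congrArg _ (funext hab)
  closed q hq h hprem := by
    show k _ = k _
    rw [hk.map_eval, hk.map_eval]
    refine hq B hB _ fun e he => ?_
    rw [← hk.map_eval, ← hk.map_eval]
    exact hprem e he

theorem IsQCongruence.quotAlg_mem_qGen {c : Set (A.carrier × A.carrier)}
    (hc : IsQCongruence Q A c) : QuotAlg A hc.toCong ∈ QGen Q := by
  intro q hq h hprem
  rw [Term.eval_quotAlg, Term.eval_quotAlg]
  refine Quotient.sound (hc.closed q hq _ fun e he => ?_)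
  have hquot := hprem e he
  rw [Term.eval_quotAlg, Term.eval_quotAlg] at hquot
  exact Quotient.exact hquot

theorem IsQCongruence.quotAlg_mem (hQ : IsQuasivariety Q) {c : Set (A.carrier × A.carrier)}
    (hc : IsQCongruence Q A c) : QuotAlg A hc.toCong ∈ Q :=
  hQ.subset hc.quotAlg_mem_qGen

theorem IsQCongruence.sUnion {C : Set (Set (A.carrier × A.carrier))}
    (hC : ∀ c ∈ C, IsQCongruence Q A c) (hchain : IsChain (· ⊆ ·) C) (hne : C.Nonempty) :
    IsQCongruence Q A (⋃₀ C) := by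
  have finite_subset : ∀ s, s.Finite → s ⊆ ⋃₀ C → ∃ c ∈ C, s ⊆ c := fun _ hs hsC =>
    DirectedOn.exists_mem_subset_of_finite_of_subset_sUnion hne hchain.directedOn hs hsC
  obtain ⟨c₀, hc₀⟩ := hne
  refine ⟨⟨fun x => ⟨c₀, hc₀, (hC c₀ hc₀).equivalence.refl x⟩, ?_, ?_⟩, ?_, ?_⟩
  · rintro x y ⟨c, hc, hxy⟩
    exact ⟨c, hc, (hC c hc).equivalence.symm hxy⟩
  · intro x y z hxy hyz
    obtain ⟨c, hc, hsub⟩ := finite_subset {(x, y), (y, z)} (Set.toFinite _)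
      (Set.insert_subset hxy (Set.singleton_subset_iff.2 hyz))
    exact ⟨c, hc, (hC c hc).equivalence.trans (hsub (.inl rfl)) (hsub (.inr rfl))⟩
  · intro o a b hab
    obtain ⟨c, hc, hsub⟩ := finite_subset (Set.range fun i => (a i, b i)) (Set.finite_range _)
      (Set.range_subset_iff.2 hab)
    exact ⟨c, hc, (hC c hc).compat o a b fun i => hsub ⟨i, rfl⟩⟩
  · intro q hq h hprem
    obtain ⟨c, hc, hsub⟩ := finite_subset
      ((fun e : Eqn S ℕ => (e.1.eval A h, e.2.eval A h)) '' {e | e ∈ q.prem})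
      (q.prem.finite_toSet.image _) (Set.image_subset_iff.2 hprem)
    exact ⟨c, hc, (hC c hc).closed q hq h fun e he => hsub ⟨e, he, rfl⟩⟩

theorem exists_maximal_isQCongruence_not_mem (hA : A ∈ Q) {a b : A.carrier} (hab : a ≠ b) :
    ∃ m, Maximal (fun c => IsQCongruence Q A c ∧ (a, b) ∉ c) m := by
  have diagonal : IsQCongruence Q A {p | p.1 = p.2} :=
    isQCongruence_ker (k := id) hA fun _ _ => rfl
  obtain ⟨m, -, hm⟩ := zorn_subset_nonempty {c | IsQCongruence Q A c ∧ (a, b) ∉ c}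
    (fun C hC hchain hne => ⟨⋃₀ C, ⟨.sUnion (fun c hc => (hC hc).1) hchain hne,
      fun ⟨c, hc, habc⟩ => (hC hc).2 habc⟩, fun _ => Set.subset_sUnion_of_mem⟩)
    _ ⟨diagonal, hab⟩
  exact ⟨m, hm⟩

theorem qSubdirectlyIrreducible_quotAlg (hQ : IsQuasivariety Q) {a b : A.carrier}
    {m : Set (A.carrier × A.carrier)}
    (hm : Maximal (fun c => IsQCongruence Q A c ∧ (a, b) ∉ c) m) :
    QSubdirectlyIrreducible Q (QuotAlg A hm.prop.1.toCong) := by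
  set θ := hm.prop.1.toCong
  refine ⟨hm.prop.1.quotAlg_mem hQ, ?_⟩
  rintro J G hG ⟨g, ⟨g_hom, g_inj⟩, g_surj⟩
  have hab : Quotient.mk θ.setoid a ≠ Quotient.mk θ.setoid b :=
    fun h => hm.prop.2 (Quotient.exact h)
  obtain ⟨j, hj⟩ := Function.ne_iff.1 (g_inj.ne hab)
  have gj_hom : IsHom (QuotAlg A θ) (G j) fun x => g x j :=
    g_hom.comp (g := fun v : (ProdAlg G).carrier => v j) fun _ _ => rfl
  have ker_le : {p | g ⟦p.1⟧ j = g ⟦p.2⟧ j} ⊆ m :=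
    hm.2 ⟨isQCongruence_ker (hG j) ((IsHom.quotientMk A θ).comp gj_hom), hj⟩
      fun p hp => congrArg (fun x => g x j) (Quotient.sound hp)
  refine ⟨j, fun x => g x j, gj_hom, ?_, g_surj j⟩
  rintro ⟨x⟩ ⟨y⟩ hxy
  exact Quotient.sound (ker_le hxy)

end QCongruence

theorem isSubdirectProduct_quotAlg {A : Alg S} {I : Type} (θ : I → Cong A)
    (hsep : ∀ a b, (∀ i, (θ i).r a b) → a = b) :
    IsSubdirectProduct A fun i => QuotAlg A (θ i) := by
  refine ⟨fun x i => Quotient.mk (θ i).setoid x, ⟨?_, ?_⟩, fun i => Quotient.mk_surjective⟩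
  · exact fun o args => funext fun i => IsHom.quotientMk A (θ i) o args
  · exact fun x y hxy => hsep x y fun i => Quotient.exact (congrFun hxy i)

/-- Every algebra in a quasivariety `Q` is (isomorphic to, via the subdirect
embedding) a `Q`-subdirect product of `Q`-subdirectly irreducible members of `Q`. -/
theorem stmt1 {S : Signature} (Q : Set (Alg S)) (hQ : IsQuasivariety Q)
    (A : Alg S) (hA : A ∈ Q) :
    ∃ (I : Type) (F : I → Alg S),
      (∀ i, F i ∈ Q) ∧ (∀ i, QSubdirectlyIrreducible Q (F i)) ∧
        IsSubdirectProduct A F := by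
  choose m hm using fun p : {p : A.carrier × A.carrier // p.1 ≠ p.2} =>
    exists_maximal_isQCongruence_not_mem hA p.2
  refine ⟨_, fun p => QuotAlg A (hm p).prop.1.toCong,
    fun p => (hm p).prop.1.quotAlg_mem hQ, fun p => qSubdirectlyIrreducible_quotAlg hQ (hm p),
    isSubdirectProduct_quotAlg _ fun a b hab => ?_⟩
  by_contra hne
  exact (hm ⟨(a, b), hne⟩).prop.2 (hab ⟨(a, b), hne⟩)
end

section
/- If Q is the quasivariety generated by a finite set K of finite algebras and A is a Q-subdirectly irreducible algebra, then A embeds into some member of K (i.e., A ∈ IS(K)). -/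
variable {S : Signature}

/-!
Points `a ≠ b` of an algebra `A ∈ Q(K)` are separated by a homomorphism into a member of `K`:
on a finite part of `A` this amounts to a quasiequation refuted by `A`, hence by some member
of `K`, and since `K` is a finite set of finite algebras, compactness glues the finite parts.
The images of these homomorphisms lie in `Q(K)` and represent `A` subdirectly, so a
`Q(K)`-subdirectly irreducible `A` is isomorphic to one of them, a subalgebra of a member of `K`.
-/

lemma Set.Finite.exists_forall_of_antitone {ι α : Type*} [Preorder α] [IsDirectedOrder α]
    [Nonempty α] {s : Set ι} (hs : s.Finite) {P : ι → α → Prop} (hP : ∀ i ∈ s, Antitone (P i))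
    (h : ∀ x, ∃ i ∈ s, P i x) : ∃ i ∈ s, ∀ x, P i x := by
  by_contra! hne
  have hev : ∀ i ∈ s, ∀ᶠ y in Filter.atTop, ¬ P i y := fun i hi => by
    obtain ⟨x, hx⟩ := hne i hi
    exact Filter.eventually_atTop.2 ⟨x, fun y hxy hy => hx (hP i hi hxy hy)⟩
  obtain ⟨y, hy⟩ := ((Filter.eventually_all_finite hs).2 hev).exists
  obtain ⟨i, hi, hPi⟩ := h y
  exact hy i hi hPi

lemma Term.eval_comp_of_isHom {X : Type} {A B : Alg S} {f : A.carrier → B.carrier}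
    (hf : IsHom A B f) (h : X → A.carrier) :
    ∀ t : Term S X, f (t.eval A h) = t.eval B (f ∘ h)
  | .var _ => rfl
  | .op o args => by
      simp only [Term.eval]
      rw [hf]
      exact congrArg _ (funext fun i => Term.eval_comp_of_isHom hf h (args i))

lemma subset_QGen (K : Set (Alg S)) : K ⊆ QGen K := fun _ hB _ hq => hq _ hB

lemma Embeds.mem_QGen {K : Set (Alg S)} {A B : Alg S} (hAB : Embeds A B) (hB : B ∈ QGen K) :
    A ∈ QGen K := by
  obtain ⟨f, hf, hinj⟩ := hAB
  intro q hq h hprem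
  apply hinj
  rw [Term.eval_comp_of_isHom hf, Term.eval_comp_of_isHom hf]
  refine hB q hq (f ∘ h) fun e he => ?_
  rw [← Term.eval_comp_of_isHom hf, ← Term.eval_comp_of_isHom hf, hprem e he]

lemma Embeds.trans {A B C : Alg S} (hAB : Embeds A B) (hBC : Embeds B C) : Embeds A C := by
  obtain ⟨f, hf, hfinj⟩ := hAB
  obtain ⟨g, hg, hginj⟩ := hBC
  exact ⟨g ∘ f, fun o args => by
    simp only [Function.comp_apply]
    rw [hf, hg], hginj.comp hfinj⟩

lemma Iso.embeds {A B : Alg S} (h : Iso A B) : Embeds A B :=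
  let ⟨f, hf, hbij⟩ := h
  ⟨f, hf, hbij.injective⟩

def IsHom.range {A B : Alg S} {f : A.carrier → B.carrier} (hf : IsHom A B f) : Alg S where
  carrier := Set.range f
  interp o args := ⟨B.interp o fun i => (args i).1, by
    choose x hx using fun i => (args i).2
    exact ⟨A.interp o x, by rw [hf]; simp only [hx]⟩⟩

lemma IsHom.range_embeds {A B : Alg S} {f : A.carrier → B.carrier} (hf : IsHom A B f) :
    Embeds hf.range B :=
  ⟨Subtype.val, fun _ _ => rfl, Subtype.val_injective⟩

lemma isSubdirectProduct_range {A : Alg S} {I : Type} {B : I → Alg S}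
    {f : ∀ i, A.carrier → (B i).carrier} (hf : ∀ i, IsHom A (B i) (f i))
    (hsep : ∀ x y, x ≠ y → ∃ i, f i x ≠ f i y) :
    IsSubdirectProduct A fun i => (hf i).range := by
  refine ⟨fun x i => ⟨f i x, x, rfl⟩, ⟨fun o args => ?_, fun x y hxy => ?_⟩, ?_⟩
  · exact funext fun i => Subtype.ext (hf i o args)
  · by_contra hne
    obtain ⟨i, hi⟩ := hsep x y hne
    exact hi (congrArg Subtype.val (congrFun hxy i))
  · rintro i ⟨_, x, rfl⟩
    exact ⟨x, rfl⟩

def homConstraint (A B : Alg S) (p : Σ o : S.ops, Fin (S.arity o) → A.carrier) :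
    Set (A.carrier → B.carrier) :=
  {g | g (A.interp p.1 p.2) = B.interp p.1 fun i => g (p.2 i)}

lemma isHom_iff_forall_mem_homConstraint {A B : Alg S} {g : A.carrier → B.carrier} :
    IsHom A B g ↔ ∀ p, g ∈ homConstraint A B p :=
  ⟨fun hg p => hg p.1 p.2, fun hg o args => hg ⟨o, args⟩⟩

/-- The premises of the quasiequation record the operation values listed in `u`, with one
variable per element involved; `A` refutes it, so some member of `K` does. -/
lemma exists_separating_homConstraint_of_mem_QGen {K : Set (Alg S)} {A : Alg S}
    (hA : A ∈ QGen K) {a b : A.carrier} (hab : a ≠ b)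
    (u : Finset (Σ o : S.ops, Fin (S.arity o) → A.carrier)) :
    ∃ B ∈ K, ∃ g : A.carrier → B.carrier, g a ≠ g b ∧ ∀ p ∈ u, g ∈ homConstraint A B p := by
  classical
  set F : Set A.carrier := {a, b} ∪ ⋃ p ∈ u, insert (A.interp p.1 p.2) (Set.range p.2)
  have hF : F.Finite :=
    (Set.toFinite _).union (u.finite_toSet.biUnion fun p _ => (Set.finite_range _).insert _)
  obtain ⟨c, hc⟩ := Set.countable_iff_exists_injOn.1 hF.countable
  have : Nonempty A.carrier := ⟨a⟩
  have hinv : ∀ x ∈ F, Function.invFunOn c F (c x) = x := fun x hx => hc.leftInvOn_invFunOn hx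
  have hres : ∀ p ∈ u, A.interp p.1 p.2 ∈ F :=
    fun p hp => Or.inr (Set.mem_biUnion hp (Set.mem_insert _ _))
  have harg : ∀ p ∈ u, ∀ i, p.2 i ∈ F :=
    fun p hp i => Or.inr (Set.mem_biUnion hp (Or.inr ⟨i, rfl⟩))
  let q : Quasieq S :=
    ⟨u.toList.map fun p => (.op p.1 fun i => .var (c (p.2 i)), .var (c (A.interp p.1 p.2))),
      (.var (c a), .var (c b))⟩
  have hAq : ¬ A.SatisfiesQ q := by
    intro hq
    refine hab ?_
    have hconcl := hq (Function.invFunOn c F) fun e he => ?_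
    · simpa [q, Term.eval, hinv a (by simp [F]), hinv b (by simp [F])] using hconcl
    · obtain ⟨p, hp, rfl⟩ := List.mem_map.1 he
      have hpu := Finset.mem_toList.1 hp
      simp [Term.eval, hinv _ (hres p hpu), hinv _ (harg p hpu _)]
  obtain ⟨B, hB, hBq⟩ : ∃ B ∈ K, ¬ B.SatisfiesQ q := by
    by_contra! hK
    exact hAq (hA q hK)
  simp only [Alg.SatisfiesQ, not_forall] at hBq
  obtain ⟨k, hprem, hconcl⟩ := hBq
  refine ⟨B, hB, k ∘ c, hconcl, fun p hp => ?_⟩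
  have hkp := hprem _ (List.mem_map_of_mem (Finset.mem_toList.2 hp))
  simp only [Term.eval] at hkp
  exact hkp.symm

/-- Compactness of `A → B`, a product of finite discrete spaces. -/
lemma exists_separating_hom_of_forall_finset {A B : Alg S} [Finite B.carrier] {a b : A.carrier}
    (h : ∀ u : Finset (Σ o : S.ops, Fin (S.arity o) → A.carrier),
      ∃ g : A.carrier → B.carrier, g a ≠ g b ∧ ∀ p ∈ u, g ∈ homConstraint A B p) :
    ∃ g, IsHom A B g ∧ g a ≠ g b := by
  let : TopologicalSpace B.carrier := ⊥
  have : DiscreteTopology B.carrier := ⟨rfl⟩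
  have hsep : IsClosed {g : A.carrier → B.carrier | g a ≠ g b} :=
    (isClosed_discrete {y : B.carrier × B.carrier | y.1 ≠ y.2}).preimage
      (f := fun g : A.carrier → B.carrier => (g a, g b)) (by fun_prop)
  have hcons : ∀ p, IsClosed (homConstraint A B p) := fun p =>
    isClosed_eq (continuous_apply _)
      (continuous_of_discreteTopology.comp (continuous_pi fun i => continuous_apply (p.2 i)))
  obtain ⟨g, hgab, hg⟩ := hsep.isCompact.inter_iInter_nonempty _ hcons fun u =>
    let ⟨g, hgab, hg⟩ := h u
    ⟨g, hgab, Set.mem_iInter₂.2 hg⟩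
  exact ⟨g, isHom_iff_forall_mem_homConstraint.2 (Set.mem_iInter.1 hg), hgab⟩

/-- Finiteness of `K` lets one member of `K` serve every finite part of `A`. -/
lemma exists_separating_hom_of_mem_QGen {K : Set (Alg S)} (hK : K.Finite)
    (hfin : ∀ B ∈ K, Finite B.carrier) {A : Alg S} (hA : A ∈ QGen K) {a b : A.carrier}
    (hab : a ≠ b) : ∃ B ∈ K, ∃ g, IsHom A B g ∧ g a ≠ g b := by
  obtain ⟨B, hB, hBu⟩ := hK.exists_forall_of_antitone
    (P := fun B u =>
      ∃ g : A.carrier → B.carrier, g a ≠ g b ∧ ∀ p ∈ u, g ∈ homConstraint A B p)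
    (fun B _ u v huv ⟨g, hgab, hg⟩ => ⟨g, hgab, fun p hp => hg p (huv hp)⟩)
    (exists_separating_homConstraint_of_mem_QGen hA hab)
  have := hfin B hB
  exact ⟨B, hB, exists_separating_hom_of_forall_finset hBu⟩

theorem stmt2_general {S : Signature} (K : Set (Alg S)) (hKfin : K.Finite)
    (hfin : ∀ A ∈ K, Finite A.carrier) (A : Alg S)
    (hA : QSubdirectlyIrreducible (QGen K) A) :
    ∃ B ∈ K, Embeds A B := by
  have hsep : ∀ p : {p : A.carrier × A.carrier // p.1 ≠ p.2},
      ∃ B ∈ K, ∃ g, IsHom A B g ∧ g p.1.1 ≠ g p.1.2 :=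
    fun p => exists_separating_hom_of_mem_QGen hKfin hfin hA.1 p.2
  choose B hBK g hg hgsep using hsep
  obtain ⟨p, hiso⟩ := hA.2 _ _
    (fun p => (hg p).range_embeds.mem_QGen (subset_QGen K (hBK p)))
    (isSubdirectProduct_range hg fun x y hxy => ⟨⟨(x, y), hxy⟩, hgsep _⟩)
  exact ⟨B p, hBK p, hiso.embeds.trans (hg p).range_embeds⟩

/-- If `Q` is the quasivariety generated by a finite set `K` of finite algebras
and `A` is `Q`-subdirectly irreducible, then `A` embeds into a member of `K`. -/
theorem stmt2 {S : Signature} [Finite S.ops] (K : Set (Alg S)) (hKfin : K.Finite)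
    (hfin : ∀ A ∈ K, Finite A.carrier) (A : Alg S)
    (hA : QSubdirectlyIrreducible (QGen K) A) :
    ∃ B ∈ K, Embeds A B :=
  stmt2_general K hKfin hfin A hA
end

section
/- Let K be a class of algebras and let K' be obtained from K by replacing an algebra A ∈ K with algebras A_1, …, A_n, where A is a Q(K)-subdirect product of A_1, …, A_n. Then Q(K) = Q(K'). -/
variable {S : Signature}

lemma eval_hom' {S : Signature} {A B : Alg S} {f : A.carrier → B.carrier}
    (hf : IsHom A B f) {X : Type} (h : X → A.carrier) (t : Term S X) :
    f (t.eval A h) = t.eval B (fun x => f (h x)) := by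
  induction t with
  | var x => rfl
  | op o args ih =>
    simp only [Term.eval, hf o]
    congr 1
    funext i
    exact ih i

lemma eval_prod' {S : Signature} {I : Type} (F : I → Alg S) {X : Type}
    (g : X → (ProdAlg F).carrier) (t : Term S X) (i : I) :
    t.eval (ProdAlg F) g i = t.eval (F i) (fun x => g x i) := by
  induction t with
  | var x => rfl
  | op o args ih =>
    simp only [Term.eval, ProdAlg]
    congr 1
    funext j
    exact ih j

/-- Replacing a member `A` of `K` by the components of a `Q(K)`-subdirect
representation of `A` does not change the generated quasivariety. -/
theorem stmt3 {S : Signature} (K : Set (Alg S)) (A : Alg S) (hA : A ∈ K)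
    (n : ℕ) (F : Fin n → Alg S) (hF : ∀ i, F i ∈ QGen K)
    (hsub : IsSubdirectProduct A F) :
    QGen K = QGen ((K \ {A}) ∪ Set.range F) := by
  have key : ∀ q : Quasieq S,
      (∀ B ∈ K, B.SatisfiesQ q) ↔ (∀ B ∈ (K \ {A}) ∪ Set.range F, B.SatisfiesQ q) := by
    intro q
    constructor
    · rintro hK B (⟨hBK, -⟩ | ⟨i, rfl⟩)
      · exact hK B hBK
      · exact hF i q hK
    · intro hK' B hBK
      by_cases hBA : B = A
      · subst hBA
        obtain ⟨f, ⟨hfhom, hfinj⟩, -⟩ := hsub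
        intro h hprem
        apply hfinj
        rw [eval_hom' hfhom, eval_hom' hfhom]
        funext i
        rw [eval_prod', eval_prod']
        have hFi : (F i).SatisfiesQ q := hK' (F i) (Or.inr ⟨i, rfl⟩)
        apply hFi
        intro e he
        rw [← eval_prod', ← eval_prod', ← eval_hom' hfhom, ← eval_hom' hfhom,
          hprem e he]
      · exact hK' B (Or.inl ⟨hBK, hBA⟩)
  ext B
  simp only [QGen, Set.mem_setOf_eq]
  constructor
  · intro hB q hq
    exact hB q ((key q).mpr hq)
  · intro hB q hq
    exact hB q ((key q).mp hq)
end

section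
/- Let K and K' be classes of L-algebras. The following are equivalent: (1) for all quasiequations, Σ ⇒ φ ≈ ψ is K-admissible iff Σ ⊨_{K'} φ ≈ ψ; (2) Q(K') = Q(F_K(ω)); (3) K' ⊆ Q(F_K(ω)) and K ⊆ V(K'). -/
variable {S : Signature}

/-!
Admissibility in `K` is validity in `F = F_K(ω)`, and two classes generate the same quasivariety
iff they validate the same quasiequations; this gives (1) ⇔ (2). For (2) ⇒ (3), `F` and `K` have
the same equations and `F ∈ Q(K')`. For (3) ⇒ (1), a `K`-unifier `σ` of `Γ` unifies `Γ` in `K'`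
(as `K' ⊆ Q(F)` and `F` validates the equations of `K`), so a quasiequation `Γ ⇒ e` valid in `K'`
makes `σ e` valid in `K'`, hence in `K ⊆ V(K')`.
-/

lemma Term.eval_subst (A : Alg S) (σ : ℕ → Term S ℕ) (g : ℕ → A.carrier) (t : Term S ℕ) :
    (t.subst σ).eval A g = t.eval A (fun n => (σ n).eval A g) := by
  induction t with
  | var x => rfl
  | op o args ih => exact congrArg (A.interp o) (funext ih)

lemma Term.subst_var (t : Term S ℕ) : t.subst Term.var = t := by
  induction t with
  | var x => rfl
  | op o args ih => exact congrArg (Term.op o) (funext ih)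

section Classes

variable {L L' : Set (Alg S)}

lemma subset_qGen (L : Set (Alg S)) : L ⊆ QGen L := fun _ hA _ hq => hq _ hA

lemma Models.mono {Γ : List (Eqn S ℕ)} {e : Eqn S ℕ} (hL : L ⊆ L') (h : Models L' Γ e) :
    Models L Γ e :=
  fun A hA => h A (hL hA)

lemma models_qGen_iff {Γ : List (Eqn S ℕ)} {e : Eqn S ℕ} :
    Models (QGen L) Γ e ↔ Models L Γ e :=
  ⟨Models.mono (subset_qGen L), fun h _ hA => hA ⟨Γ, e⟩ h⟩

lemma qGen_eq_qGen_iff :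
    QGen L = QGen L' ↔ ∀ Γ e, Models L Γ e ↔ Models L' Γ e := by
  refine ⟨fun h Γ e => by rw [← models_qGen_iff, h, models_qGen_iff], fun h => ?_⟩
  ext A
  exact ⟨fun hA q hq => hA q ((h q.prem q.concl).2 hq),
    fun hA q hq => hA q ((h q.prem q.concl).1 hq)⟩

lemma eqValid_iff_models_nil {e : Eqn S ℕ} : EqValid L e ↔ Models L [] e := by
  simp [EqValid, Models, Alg.SatisfiesEqn]

lemma eqValid_qGen_iff {e : Eqn S ℕ} : EqValid (QGen L) e ↔ EqValid L e := by
  rw [eqValid_iff_models_nil, eqValid_iff_models_nil, models_qGen_iff]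

lemma EqValid.mono {e : Eqn S ℕ} (hL : L ⊆ L') (h : EqValid L' e) : EqValid L e :=
  fun A hA => h A (hL hA)

lemma EqValid.subst {e : Eqn S ℕ} (h : EqValid L e) (σ : ℕ → Term S ℕ) :
    EqValid L (e.1.subst σ, e.2.subst σ) := by
  intro A hA g
  simp only [Term.eval_subst]
  exact h A hA _

lemma subset_vGen_iff : L ⊆ VGen L' ↔ ∀ e, EqValid L' e → EqValid L e :=
  ⟨fun h _ he _ hA => h hA _ he, fun h _ hA e he => h e he _ hA⟩

lemma Models.admissible {Γ : List (Eqn S ℕ)} {e : Eqn S ℕ} (h : Models L Γ e) :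
    Admissible L Γ e := by
  intro σ hσ A hA g
  have hprem : ∀ p ∈ Γ, p.1.eval A (fun n => (σ n).eval A g) =
      p.2.eval A (fun n => (σ n).eval A g) := fun p hp => by
    simpa only [Term.eval_subst] using hσ p hp A hA g
  simpa only [Term.eval_subst] using h A hA _ hprem

end Classes

namespace FreeAlg

variable (K : Set (Alg S))

noncomputable abbrev mk (t : Term S ℕ) : (FreeAlg K ℕ).carrier :=
  Quotient.mk (freeCong K ℕ).setoid t

lemma mk_eq_mk_iff {φ ψ : Term S ℕ} : mk K φ = mk K ψ ↔ EqValid K (φ, ψ) :=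
  ⟨fun h A hA g => Quotient.exact h A hA g, fun h => Quotient.sound fun A hA g => h A hA g⟩

lemma eval_mk (σ : ℕ → Term S ℕ) (t : Term S ℕ) :
    t.eval (FreeAlg K ℕ) (fun n => mk K (σ n)) = mk K (t.subst σ) := by
  induction t with
  | var x => rfl
  | op o args ih =>
    exact Quotient.sound ((freeCong K ℕ).compat o _ _ fun i =>
      Quotient.exact ((Quotient.out_eq _).trans (ih i)))

lemma forall_assignment {P : (ℕ → (FreeAlg K ℕ).carrier) → Prop} :
    (∀ h, P h) ↔ ∀ σ : ℕ → Term S ℕ, P (fun n => mk K (σ n)) := by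
  refine ⟨fun H σ => H _, fun H h => ?_⟩
  have hh : (fun n => mk K (h n).out) = h := funext fun n => Quotient.out_eq (h n)
  exact hh ▸ H fun n => (h n).out

lemma eval_eq_eval_iff (σ : ℕ → Term S ℕ) (e : Eqn S ℕ) :
    e.1.eval (FreeAlg K ℕ) (fun n => mk K (σ n)) = e.2.eval (FreeAlg K ℕ) (fun n => mk K (σ n)) ↔
      EqValid K (e.1.subst σ, e.2.subst σ) := by
  rw [eval_mk, eval_mk, mk_eq_mk_iff]

lemma eqValid_singleton_iff {e : Eqn S ℕ} : EqValid {FreeAlg K ℕ} e ↔ EqValid K e := by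
  simp only [EqValid, Set.mem_singleton_iff, forall_eq, Alg.SatisfiesEqn, forall_assignment,
    eval_eq_eval_iff]
  exact ⟨fun h => by simpa only [Term.subst_var] using h Term.var,
    fun h σ => EqValid.subst (L := K) h σ⟩

lemma admissible_iff_models {Γ : List (Eqn S ℕ)} {e : Eqn S ℕ} :
    Admissible K Γ e ↔ Models {FreeAlg K ℕ} Γ e := by
  simp only [Models, Set.mem_singleton_iff, forall_eq, forall_assignment, eval_eq_eval_iff]
  rfl

end FreeAlg

/-- Equivalence of: (1) `K`-admissibility coincides with validity in `K'`;
(2) `Q(K') = Q(F_K(ω))`; (3) `K' ⊆ Q(F_K(ω))` and `K ⊆ V(K')`. -/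
theorem stmt14 {S : Signature} (K K' : Set (Alg S)) :
    ((∀ (Γ : List (Eqn S ℕ)) (e : Eqn S ℕ),
        Admissible K Γ e ↔ Models K' Γ e) ↔
      QGen K' = QGen {FreeAlg K ℕ}) ∧
    (QGen K' = QGen {FreeAlg K ℕ} ↔
      (K' ⊆ QGen {FreeAlg K ℕ} ∧ K ⊆ VGen K')) := by
  have h12 : (∀ Γ e, Admissible K Γ e ↔ Models K' Γ e) ↔ QGen K' = QGen {FreeAlg K ℕ} := by
    simp only [qGen_eq_qGen_iff, FreeAlg.admissible_iff_models, Iff.comm]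
  have h23 (hQ : QGen K' = QGen {FreeAlg K ℕ}) : K' ⊆ QGen {FreeAlg K ℕ} ∧ K ⊆ VGen K' := by
    refine ⟨hQ ▸ subset_qGen K', subset_vGen_iff.2 fun e he => ?_⟩
    rwa [← FreeAlg.eqValid_singleton_iff, ← eqValid_qGen_iff, ← hQ, eqValid_qGen_iff]
  have h31 (hK' : K' ⊆ QGen {FreeAlg K ℕ}) (hK : K ⊆ VGen K') (Γ : List (Eqn S ℕ)) (e : Eqn S ℕ) :
      Admissible K Γ e ↔ Models K' Γ e := by
    have hKK' (e : Eqn S ℕ) (he : EqValid K e) : EqValid K' e :=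
      (eqValid_qGen_iff.2 ((FreeAlg.eqValid_singleton_iff K).2 he)).mono hK'
    refine ⟨fun h => (models_qGen_iff.2 ((FreeAlg.admissible_iff_models K).1 h)).mono hK',
      fun h σ hσ => subset_vGen_iff.1 hK _ (h.admissible σ fun p hp => hKK' _ (hσ p hp))⟩
  exact ⟨h12, ⟨h23, fun h => h12.1 (h31 h.1 h.2)⟩⟩
end

section
/- Let L = (A, D_A) be a finite-valued logic, L* = (F_A(|A|), D*) with D* the set of classes of L-valid terms in the free algebra on |A| generators, and L' = (B, D_B) a sublogic of L* such that there exists a surjective homomorphism h : B → A with h[D_B] ⊆ D_A. Then a rule Γ / φ is L-admissible if and only if Γ ⊢_{L'} φ. -/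
variable {S : Signature}

/-- `φ` is valid in the finite-valued logic `(A, D)`: every assignment
evaluates `φ` to a designated value. -/
def LValid {S : Signature} (A : Alg S) (D : Set A.carrier) (φ : Term S ℕ) : Prop :=
  ∀ h : ℕ → A.carrier, φ.eval A h ∈ D

/-- Consequence in the finite-valued logic `(A, D)`. -/
def LConseq {S : Signature} (A : Alg S) (D : Set A.carrier)
    (Γ : List (Term S ℕ)) (φ : Term S ℕ) : Prop :=
  ∀ h : ℕ → A.carrier, (∀ ψ ∈ Γ, ψ.eval A h ∈ D) → φ.eval A h ∈ D

/-- The designated values of `L* = (F_A(|A|), D*)`: the classes of `L`-valid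
terms in the free algebra on `|A|` generators. -/
def Dstar {S : Signature} (A : Alg S) (D : Set A.carrier) :
    Set (FreeAlg {A} (Fin (Nat.card A.carrier))).carrier :=
  { x | ∃ φ : Term S (Fin (Nat.card A.carrier)),
      x = Quotient.mk (freeCong {A} (Fin (Nat.card A.carrier))).setoid φ ∧
      ∀ h : Fin (Nat.card A.carrier) → A.carrier, φ.eval A h ∈ D }

namespace Stmt19Aux

/-- Generalized substitution (allowing a change of variable type). -/
def tsub {X Y : Type} (σ : X → Term S Y) : Term S X → Term S Y
  | .var x => σ x
  | .op o a => .op o (fun i => tsub σ (a i))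

theorem tsub_eval {X Y : Type} (A : Alg S) (σ : X → Term S Y) (g : Y → A.carrier) :
    ∀ t : Term S X, (tsub σ t).eval A g = t.eval A (fun x => (σ x).eval A g)
  | .var _ => rfl
  | .op o a => by
    show A.interp o _ = A.interp o _
    congr 1; funext i; exact tsub_eval A σ g (a i)

theorem subst_eq_tsub (σ : ℕ → Term S ℕ) : ∀ t : Term S ℕ, t.subst σ = tsub σ t
  | .var _ => rfl
  | .op o a => by
    show Term.op o _ = Term.op o _
    congr 1; funext i; exact subst_eq_tsub σ (a i)

theorem hom_eval {A B : Alg S} {f : A.carrier → B.carrier} (hf : IsHom A B f)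
    {X : Type} (g : X → A.carrier) :
    ∀ t : Term S X, f (t.eval A g) = t.eval B (fun x => f (g x))
  | .var _ => rfl
  | .op o a => by
    show f (A.interp o _) = B.interp o _
    rw [hf]; congr 1; funext i; exact hom_eval hf g (a i)

theorem free_eval (K : Set (Alg S)) (X Z : Type) (τ : Z → Term S X) :
    ∀ t : Term S Z,
      t.eval (FreeAlg K X) (fun n => Quotient.mk (freeCong K X).setoid (τ n))
        = Quotient.mk (freeCong K X).setoid (tsub τ t)
  | .var _ => rfl
  | .op o a => by
    show Quotient.mk (freeCong K X).setoid
        ((TermAlg S X).interp o (fun i =>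
          ((a i).eval (FreeAlg K X) (fun n => Quotient.mk (freeCong K X).setoid (τ n))).out))
      = _
    apply Quotient.sound
    apply (freeCong K X).compat
    intro i
    exact Quotient.exact ((Quotient.out_eq _).trans (free_eval K X Z τ (a i)))

theorem mem_Dstar {A : Alg S} {DA : Set A.carrier} {t : Term S (Fin (Nat.card A.carrier))}
    (ht : ∀ g, t.eval A g ∈ DA) :
    Quotient.mk (freeCong {A} (Fin (Nat.card A.carrier))).setoid t ∈ Dstar A DA :=
  ⟨t, rfl, ht⟩

theorem of_mem_Dstar {A : Alg S} {DA : Set A.carrier} {t : Term S (Fin (Nat.card A.carrier))}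
    (ht : Quotient.mk (freeCong {A} (Fin (Nat.card A.carrier))).setoid t ∈ Dstar A DA) :
    ∀ g, t.eval A g ∈ DA := by
  obtain ⟨φ', heq, hval⟩ := ht
  intro g
  have hrel := Quotient.exact heq
  rw [hrel A (Set.mem_singleton A) g]
  exact hval g

end Stmt19Aux

/-- Let `L = (A, D_A)` be a finite-valued logic and `L' = (B, D_B)` a sublogic
of `L* = (F_A(|A|), D*)` such that there is a surjective homomorphism
`h : B → A` with `h[D_B] ⊆ D_A`. Then a rule `Γ / φ` is `L`-admissible iff
`Γ ⊢_{L'} φ`. -/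
theorem stmt19 {S : Signature} (A : Alg S) [Finite A.carrier]
    (DA : Set A.carrier) (B : Alg S) (DB : Set B.carrier)
    (e : B.carrier → (FreeAlg {A} (Fin (Nat.card A.carrier))).carrier)
    (hemb : IsEmbedding B (FreeAlg {A} (Fin (Nat.card A.carrier))) e)
    (hDB : DB = e ⁻¹' Dstar A DA)
    (h : B.carrier → A.carrier) (hhom : IsHom B A h)
    (hsurj : Function.Surjective h) (hD : h '' DB ⊆ DA)
    (Γ : List (Term S ℕ)) (φ : Term S ℕ) :
    (∀ σ : ℕ → Term S ℕ,
        (∀ ψ ∈ Γ, LValid A DA (ψ.subst σ)) → LValid A DA (φ.subst σ)) ↔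
      LConseq B DB Γ φ := by
  open Stmt19Aux in
  constructor
  · -- admissible → LConseq
    intro hadm g hgprem
    rcases isEmpty_or_nonempty A.carrier with hE | hNE
    · exact (hE.false (h (g 0))).elim
    · -- representatives of the images of g in the free algebra
      set τ : ℕ → Term S (Fin (Nat.card A.carrier)) := fun m => (e (g m)).out with hτ
      have hmkτ : ∀ m, e (g m) = Quotient.mk (freeCong {A} (Fin (Nat.card A.carrier))).setoid (τ m) :=
        fun m => (Quotient.out_eq _).symm
      set σ : ℕ → Term S ℕ := fun m => tsub (fun i : Fin (Nat.card A.carrier) => Term.var (i : ℕ)) (τ m) with hσ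
      -- e of an evaluation in B is the evaluation in the free algebra
      have key : ∀ t : Term S ℕ,
          e (t.eval B g) = Quotient.mk (freeCong {A} (Fin (Nat.card A.carrier))).setoid (tsub τ t) := by
        intro t
        have h1 := hom_eval hemb.1 g t
        have h2 : (fun m => e (g m))
            = fun m => Quotient.mk (freeCong {A} (Fin (Nat.card A.carrier))).setoid (τ m) := funext hmkτ
        rw [h1, h2, free_eval]
      -- evaluation of substituted terms in A
      have keyA : ∀ (t : Term S ℕ) (hv : ℕ → A.carrier),
          (t.subst σ).eval A hv = (tsub τ t).eval A (fun i : Fin (Nat.card A.carrier) => hv i) := by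
        intro t hv
        rw [subst_eq_tsub, tsub_eval, tsub_eval]
        congr 1
        funext m
        rw [hσ]
        exact tsub_eval A (fun i : Fin (Nat.card A.carrier) => Term.var (i : ℕ)) hv (τ m)
      have hunif : ∀ ψ ∈ Γ, LValid A DA (ψ.subst σ) := by
        intro ψ hψ hv
        have hmem : e (ψ.eval B g) ∈ Dstar A DA := by
          have := hgprem ψ hψ
          rw [hDB] at this
          exact this
        rw [key ψ] at hmem
        rw [keyA]
        exact of_mem_Dstar hmem (fun i : Fin (Nat.card A.carrier) => hv i)
      have hφ := hadm σ hunif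
      rw [hDB]
      show e (φ.eval B g) ∈ Dstar A DA
      rw [key φ]
      apply mem_Dstar
      intro g'
      set hv : ℕ → A.carrier :=
        fun m => if hm : m < Nat.card A.carrier then g' ⟨m, hm⟩ else Classical.arbitrary A.carrier with hhv
      have hg' : (fun i : Fin (Nat.card A.carrier) => hv (i : ℕ)) = g' := by
        funext i
        simp only [hhv, i.isLt, dif_pos]
      have := hφ hv
      rw [keyA, hg'] at this
      exact this
  · -- LConseq → admissible
    intro hcon σ hunif u
    set b : A.carrier → B.carrier := Function.surjInv hsurj with hb
    have hbid : ∀ a, h (b a) = a := fun a => Function.surjInv_eq hsurj a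
    set v : ℕ → B.carrier := fun m => (σ m).eval B (fun k => b (u k)) with hv
    set τ : ℕ → Term S (Fin (Nat.card A.carrier)) := fun m => (e (b (u m))).out with hτ
    have hmkτ : ∀ m, e (b (u m)) = Quotient.mk (freeCong {A} (Fin (Nat.card A.carrier))).setoid (τ m) :=
      fun m => (Quotient.out_eq _).symm
    have key : ∀ t : Term S ℕ,
        e (t.eval B (fun k => b (u k)))
          = Quotient.mk (freeCong {A} (Fin (Nat.card A.carrier))).setoid (tsub τ t) := by
      intro t
      have h1 := hom_eval hemb.1 (fun k => b (u k)) t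
      have h2 : (fun m => e (b (u m)))
          = fun m => Quotient.mk (freeCong {A} (Fin (Nat.card A.carrier))).setoid (τ m) := funext hmkτ
      rw [h1, h2, free_eval]
    have hvprem : ∀ ψ ∈ Γ, ψ.eval B v ∈ DB := by
      intro ψ hψ
      rw [hDB]
      show e (ψ.eval B v) ∈ Dstar A DA
      have hev : ψ.eval B v = (ψ.subst σ).eval B (fun k => b (u k)) := by
        rw [subst_eq_tsub, tsub_eval]
      rw [hev, key]
      apply mem_Dstar
      intro g'
      rw [tsub_eval]
      have hre : (tsub τ (ψ.subst σ)).eval A g'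
          = (ψ.subst σ).eval A (fun m => (τ m).eval A g') := tsub_eval A τ g' _
      exact hre ▸ (hunif ψ hψ (fun m => (τ m).eval A g'))
    have hconc := hcon v hvprem
    have hDA : h (φ.eval B v) ∈ DA := hD ⟨_, hconc, rfl⟩
    have hev : h (φ.eval B v) = (φ.subst σ).eval A u := by
      rw [hv]
      have h1 : φ.eval B (fun m => (σ m).eval B (fun k => b (u k)))
          = (φ.subst σ).eval B (fun k => b (u k)) := by
        rw [subst_eq_tsub, tsub_eval]
      rw [h1, hom_eval hhom]
      congr 1
      funext k
      exact hbid (u k)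
    rw [hev] at hDA
    exact hDA
end
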